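/- Brezis–Lieb type splitting: let 1 < q₁ ≤ q₂ < ∞, let R : ℝ → ℝ be of class C¹ with |R'(s)| ≤ b₁|s|^{q₁−1} + b₂|s|^{q₂−1} for some b₁,b₂ > 0, and set T̃(u) = ∫_{ℝ^N} R(u) dx. If {u_n} is a sequence bounded in L^{q₁}(ℝ^N) ∩ L^{q₂}(ℝ^N) and u_n → u almost everywhere, then T̃(u_n − u) + T̃(u) = T̃(u_n) + o(1) as n → ∞. -/

import Mathlib

/-!
Write `φ(s) = |s|^q₁ + |s|^q₂`. The mean value theorem and the growth of `R'` give the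
Brezis–Lieb inequality: for every `ε > 0` there is `K` with
`|R(a + b) - R a - R b| ≤ ε φ(a) + K φ(b)` (split according to whether `|b| ≤ η |a|`).
With `a = uₙ - u`, `b = u`, the positive part of `|R(uₙ) - R(uₙ - u) - R(u)| - ε φ(uₙ - u)` is
dominated by `K φ(u)`, which is integrable because Fatou's lemma puts `u` in `L^q₁ ∩ L^q₂`, and it
tends to `0` a.e., so its integral tends to `0`; what remains is at most `ε sup ∫ φ(uₙ - u)`, and
`uₙ - u` is bounded in `L^q₁ ∩ L^q₂`. If `R 0 ≠ 0`, none of the integrals exists on the infinite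
measure space `ℝ^N`, so all of them are `0` by convention.
-/

open MeasureTheory Filter Topology ENNReal

lemma rpow_sub_one_mul_self {x q : ℝ} (hx : 0 ≤ x) (hq : q ≠ 0) :
    x ^ (q - 1) * x = x ^ q := by
  rw [← Real.rpow_add_one' hx (by simpa using hq), sub_add_cancel]

lemma add_rpow_sub_one_mul_le {x y q η : ℝ} (hx : 0 ≤ x) (hy : 0 ≤ y) (hq : 1 ≤ q)
    (hη : 0 < η) :
    (x + y) ^ (q - 1) * y ≤ η * (1 + η) ^ (q - 1) * x ^ q + (1 + η⁻¹) ^ (q - 1) * y ^ q := by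
  have hq0 : q ≠ 0 := by positivity
  rcases le_or_gt y (η * x) with hyx | hxy
  · have hsum : x + y ≤ (1 + η) * x := by linarith
    calc (x + y) ^ (q - 1) * y ≤ ((1 + η) * x) ^ (q - 1) * (η * x) := by
          gcongr
      _ = η * (1 + η) ^ (q - 1) * (x ^ (q - 1) * x) := by
          rw [Real.mul_rpow (by positivity) hx]; ring
      _ ≤ _ := by
          rw [rpow_sub_one_mul_self hx hq0]; exact le_add_of_nonneg_right (by positivity)
  · have hsum : x + y ≤ (1 + η⁻¹) * y := by
      have : x ≤ η⁻¹ * y := by rw [inv_mul_eq_div, le_div_iff₀ hη]; linarith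
      linarith
    calc (x + y) ^ (q - 1) * y ≤ ((1 + η⁻¹) * y) ^ (q - 1) * y := by
          gcongr
      _ = (1 + η⁻¹) ^ (q - 1) * (y ^ (q - 1) * y) := by
          rw [Real.mul_rpow (by positivity) hy]; ring
      _ ≤ _ := by
          rw [rpow_sub_one_mul_self hy hq0]; exact le_add_of_nonneg_left (by positivity)

lemma exists_mul_add_rpow_sub_one_mul_le {q c ε : ℝ} (hq : 1 ≤ q) (hc : 0 ≤ c)
    (hε : 0 < ε) :
    ∃ K, 0 ≤ K ∧ ∀ x y : ℝ, 0 ≤ x → 0 ≤ y →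
      c * ((x + y) ^ (q - 1) * y) ≤ ε * x ^ q + K * y ^ q := by
  have hlim : Tendsto (fun η : ℝ => c * (η * (1 + η) ^ (q - 1))) (𝓝[>] 0) (𝓝 0) := by
    apply tendsto_nhdsWithin_of_tendsto_nhds
    have hcont : Continuous (fun η : ℝ => c * (η * (1 + η) ^ (q - 1))) := by
      fun_prop (disch := linarith)
    simpa using hcont.tendsto 0
  obtain ⟨η, hηε, hη⟩ :=
    ((hlim.eventually (gt_mem_nhds hε)).and self_mem_nhdsWithin).exists
  refine ⟨c * (1 + η⁻¹) ^ (q - 1), by positivity, fun x y hx hy => ?_⟩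
  calc c * ((x + y) ^ (q - 1) * y)
      ≤ c * (η * (1 + η) ^ (q - 1) * x ^ q + (1 + η⁻¹) ^ (q - 1) * y ^ q) :=
        mul_le_mul_of_nonneg_left (add_rpow_sub_one_mul_le hx hy hq hη) hc
    _ = c * (η * (1 + η) ^ (q - 1)) * x ^ q + c * (1 + η⁻¹) ^ (q - 1) * y ^ q := by ring
    _ ≤ ε * x ^ q + c * (1 + η⁻¹) ^ (q - 1) * y ^ q := by gcongr

lemma abs_sub_le_of_abs_deriv_le {R G : ℝ → ℝ} (hR : Differentiable ℝ R)
    (hG : MonotoneOn G (Set.Ici 0)) (hR' : ∀ s, |deriv R s| ≤ G |s|) (a b : ℝ) :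
    |R (a + b) - R a| ≤ G (|a| + |b|) * |b| := by
  have hball :
      ∀ s ∈ Metric.closedBall (0 : ℝ) (|a| + |b|), ‖deriv R s‖ ≤ G (|a| + |b|) := by
    intro s hs
    rw [mem_closedBall_zero_iff, Real.norm_eq_abs] at hs
    exact (hR' s).trans (hG (abs_nonneg s) (Set.mem_Ici.2 (by positivity)) hs)
  have := (convex_closedBall (0 : ℝ) (|a| + |b|)).norm_image_sub_le_of_norm_deriv_le
    (fun s _ => hR s) hball (x := a) (y := a + b) (by simp) (by simpa using abs_add_le a b)
  simpa using this

section GrowthBound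

variable {q₁ q₂ b₁ b₂ : ℝ} {R : ℝ → ℝ}

lemma monotoneOn_mul_rpow_add_mul_rpow (hq₁ : 1 ≤ q₁) (hq₂ : 1 ≤ q₂) (hb₁ : 0 ≤ b₁)
    (hb₂ : 0 ≤ b₂) :
    MonotoneOn (fun t : ℝ => b₁ * t ^ (q₁ - 1) + b₂ * t ^ (q₂ - 1)) (Set.Ici 0) := by
  intro s hs t _ hst
  simp only
  gcongr

lemma abs_sub_map_zero_le (hq₁ : 1 ≤ q₁) (hq₂ : 1 ≤ q₂) (hb₁ : 0 ≤ b₁) (hb₂ : 0 ≤ b₂)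
    (hR : Differentiable ℝ R)
    (hR' : ∀ s : ℝ, |deriv R s| ≤ b₁ * |s| ^ (q₁ - 1) + b₂ * |s| ^ (q₂ - 1)) (s : ℝ) :
    |R s - R 0| ≤ b₁ * |s| ^ q₁ + b₂ * |s| ^ q₂ := by
  have := abs_sub_le_of_abs_deriv_le hR
    (monotoneOn_mul_rpow_add_mul_rpow hq₁ hq₂ hb₁ hb₂) hR' 0 s
  rw [zero_add, abs_zero, zero_add, add_mul, mul_assoc, mul_assoc,
    rpow_sub_one_mul_self (abs_nonneg s) (by positivity),
    rpow_sub_one_mul_self (abs_nonneg s) (by positivity)] at this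
  exact this

lemma exists_abs_map_add_sub_map_sub_map_le (hq₁ : 1 ≤ q₁) (hq₂ : 1 ≤ q₂) (hb₁ : 0 ≤ b₁)
    (hb₂ : 0 ≤ b₂) (hR : Differentiable ℝ R)
    (hR' : ∀ s : ℝ, |deriv R s| ≤ b₁ * |s| ^ (q₁ - 1) + b₂ * |s| ^ (q₂ - 1))
    (hR0 : R 0 = 0) {ε : ℝ} (hε : 0 < ε) :
    ∃ K, ∀ a b : ℝ,
      |R (a + b) - R a - R b| ≤ ε * (|a| ^ q₁ + |a| ^ q₂) + K * (|b| ^ q₁ + |b| ^ q₂) := by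
  obtain ⟨K₁, hK₁, h₁⟩ := exists_mul_add_rpow_sub_one_mul_le hq₁ hb₁ hε
  obtain ⟨K₂, hK₂, h₂⟩ := exists_mul_add_rpow_sub_one_mul_le hq₂ hb₂ hε
  refine ⟨K₁ + K₂ + b₁ + b₂, fun a b => ?_⟩
  have hincr := abs_sub_le_of_abs_deriv_le hR
    (monotoneOn_mul_rpow_add_mul_rpow hq₁ hq₂ hb₁ hb₂) hR' a b
  have hgrowth := abs_sub_map_zero_le hq₁ hq₂ hb₁ hb₂ hR hR' b
  rw [hR0, sub_zero] at hgrowth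
  have e₁ := h₁ |a| |b| (abs_nonneg a) (abs_nonneg b)
  have e₂ := h₂ |a| |b| (abs_nonneg a) (abs_nonneg b)
  have n₁ : 0 ≤ |b| ^ q₁ := by positivity
  have n₂ : 0 ≤ |b| ^ q₂ := by positivity
  calc |R (a + b) - R a - R b| ≤ |R (a + b) - R a| + |R b| := abs_sub _ _
    _ ≤ _ := by nlinarith

end GrowthBound

section Integrals

variable {α : Type*} [MeasurableSpace α] {μ : Measure α}

theorem tendsto_integral_abs_map_add_sub_map_sub_map {j φ : ℝ → ℝ} (hj : Continuous j)
    (hj0 : j 0 = 0) (hφ : ∀ s, 0 ≤ φ s)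
    (hjφ : ∀ ε > 0, ∃ K, ∀ a b, |j (a + b) - j a - j b| ≤ ε * φ a + K * φ b)
    {f : ℕ → α → ℝ} {g : α → ℝ} (hf : ∀ n, AEStronglyMeasurable (f n) μ)
    (hg : AEStronglyMeasurable g μ) (hφf : ∀ n, Integrable (fun x => φ (f n x)) μ) {M : ℝ}
    (hM : ∀ n, ∫ x, φ (f n x) ∂μ ≤ M) (hφg : Integrable (fun x => φ (g x)) μ)
    (hf0 : ∀ᵐ x ∂μ, Tendsto (fun n => f n x) atTop (𝓝 0)) :
    Tendsto (fun n => ∫ x, |j (f n x + g x) - j (f n x) - j (g x)| ∂μ) atTop (𝓝 0) := by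
  set Δ : ℕ → α → ℝ := fun n x => j (f n x + g x) - j (f n x) - j (g x)
  have hM0 : 0 ≤ M := (integral_nonneg fun x => hφ _).trans (hM 0)
  suffices h : ∀ ε > 0, ∀ᶠ n in atTop, ∫ x, |Δ n x| ∂μ ≤ ε * (1 + M) by
    refine tendsto_order.2 ⟨fun c hc => Eventually.of_forall fun n =>
      hc.trans_le (integral_nonneg fun x => abs_nonneg _), fun c hc => ?_⟩
    filter_upwards [h (c / (2 * (1 + M))) (by positivity)] with n hn
    calc _ ≤ c / (2 * (1 + M)) * (1 + M) := hn
      _ < c := by field_simp; linarith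
  intro ε hε
  obtain ⟨K, hK⟩ := hjφ ε hε
  -- The excess of `|Δ n|` over `ε φ (f n)`: dominated by `|K| φ g`, and null in the limit.
  set ψ : ℕ → α → ℝ := fun n x => max (|Δ n x| - ε * φ (f n x)) 0
  have hψ_meas : ∀ n, AEStronglyMeasurable (ψ n) μ := fun n =>
    ((((hj.comp_aestronglyMeasurable ((hf n).add hg)).sub
      (hj.comp_aestronglyMeasurable (hf n))).sub (hj.comp_aestronglyMeasurable hg)).norm.sub
      ((hφf n).1.const_mul ε)).sup aestronglyMeasurable_const
  have hψ_bound (n : ℕ) : ∀ᵐ x ∂μ, ‖ψ n x‖ ≤ |K| * φ (g x) := by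
    refine Eventually.of_forall fun x => ?_
    rw [Real.norm_eq_abs, abs_of_nonneg (le_max_right _ _)]
    refine max_le ?_ (mul_nonneg (abs_nonneg K) (hφ _))
    linarith [hK (f n x) (g x), mul_le_mul_of_nonneg_right (le_abs_self K) (hφ (g x))]
  have hψ_int : ∀ n, Integrable (ψ n) μ := fun n =>
    (hφg.const_mul |K|).mono' (hψ_meas n) (hψ_bound n)
  have hψ_lim : Tendsto (fun n => ∫ x, ψ n x ∂μ) atTop (𝓝 0) := by
    have := tendsto_integral_of_dominated_convergence (f := fun _ => 0) _ hψ_meas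
      (hφg.const_mul |K|) hψ_bound ?_
    · simpa using this
    filter_upwards [hf0] with x hx
    have hΔ : Tendsto (fun n => |Δ n x|) atTop (𝓝 0) := by
      have := (((hj.tendsto _).comp (hx.add_const (g x))).sub ((hj.tendsto _).comp hx)).sub_const
        (j (g x))
      simpa [hj0] using this.abs
    refine squeeze_zero (fun n => le_max_right _ _) (fun n => max_le ?_ (abs_nonneg _)) hΔ
    linarith [mul_nonneg hε.le (hφ (f n x))]
  have hΔ_le : ∀ n, ∫ x, |Δ n x| ∂μ ≤ ∫ x, ψ n x ∂μ + ε * M := fun n => by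
    calc ∫ x, |Δ n x| ∂μ ≤ ∫ x, (ψ n x + ε * φ (f n x)) ∂μ :=
          integral_mono_of_nonneg (Eventually.of_forall fun x => abs_nonneg _)
            ((hψ_int n).add ((hφf n).const_mul ε))
            (Eventually.of_forall fun x => by
              linarith [le_max_left (|Δ n x| - ε * φ (f n x)) 0])
      _ ≤ ∫ x, ψ n x ∂μ + ε * M := by
          rw [integral_add (hψ_int n) ((hφf n).const_mul ε), integral_const_mul]
          gcongr
          exact hM n
  filter_upwards [hψ_lim.eventually (eventually_le_nhds hε)] with n hn
  linarith [hΔ_le n]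

lemma integrable_rpow_abs_of_memLp {v : α → ℝ} {q : ℝ} (hq : 0 < q)
    (hv : MemLp v (ENNReal.ofReal q) μ) : Integrable (fun x => |v x| ^ q) μ := by
  simpa [Real.norm_eq_abs, ENNReal.toReal_ofReal hq.le] using
    hv.integrable_norm_rpow (by simpa using hq) ofReal_ne_top

lemma integral_rpow_abs_le_of_eLpNorm_le {v : α → ℝ} {q : ℝ} (hq : 0 < q) {C : ℝ≥0∞}
    (hC : C ≠ ⊤) (hv : AEStronglyMeasurable v μ) (hvC : eLpNorm v (ENNReal.ofReal q) μ ≤ C) :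
    ∫ x, |v x| ^ q ∂μ ≤ C.toReal ^ q := by
  have hmem : MemLp v (ENNReal.ofReal q) μ := ⟨hv, hvC.trans_lt hC.lt_top⟩
  rw [hmem.eLpNorm_eq_integral_rpow_norm (by simpa using hq) ofReal_ne_top,
    ENNReal.ofReal_le_iff_le_toReal hC, toReal_ofReal hq.le] at hvC
  simp only [Real.norm_eq_abs] at hvC
  rwa [← Real.rpow_inv_le_iff_of_pos (integral_nonneg fun x => by positivity) toReal_nonneg hq]

lemma eLpNorm_sub_lim_le_two_mul {E : Type*} [NormedAddCommGroup E] {p : ℝ≥0∞} (hp : 1 ≤ p)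
    {u : ℕ → α → E} {g : α → E} {C : ℝ≥0∞} (hu : ∀ n, AEStronglyMeasurable (u n) μ)
    (huC : ∀ n, eLpNorm (u n) p μ ≤ C)
    (hae : ∀ᵐ x ∂μ, Tendsto (fun n => u n x) atTop (𝓝 (g x))) (n : ℕ) :
    eLpNorm (u n - g) p μ ≤ 2 * C := by
  have hgC : eLpNorm g p μ ≤ C := Lp.eLpNorm_le_of_ae_tendsto (Eventually.of_forall huC) hu hae
  calc eLpNorm (u n - g) p μ ≤ eLpNorm (u n) p μ + eLpNorm g p μ :=
        eLpNorm_sub_le (hu n) (aestronglyMeasurable_of_tendsto_ae atTop hu hae) hp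
    _ ≤ 2 * C := by rw [two_mul]; exact add_le_add (huC n) hgC

lemma memLp_of_eLpNorm_le_of_tendsto_ae {E : Type*} [NormedAddCommGroup E] {p : ℝ≥0∞}
    {u : ℕ → α → E} {g : α → E} {C : ℝ≥0∞} (hC : C ≠ ⊤) (hu : ∀ n, AEStronglyMeasurable (u n) μ)
    (huC : ∀ n, eLpNorm (u n) p μ ≤ C)
    (hae : ∀ᵐ x ∂μ, Tendsto (fun n => u n x) atTop (𝓝 (g x))) : MemLp g p μ :=
  ⟨aestronglyMeasurable_of_tendsto_ae atTop hu hae,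
    (Lp.eLpNorm_le_of_ae_tendsto (Eventually.of_forall huC) hu hae).trans_lt hC.lt_top⟩

lemma integral_eq_zero_of_integrable_sub_const {F : α → ℝ} {c : ℝ} (hc : c ≠ 0)
    (hμ : μ Set.univ = ∞) (hF : Integrable (fun x => F x - c) μ) : ∫ x, F x ∂μ = 0 := by
  refine integral_undef fun hF' => ?_
  have hconst : Integrable (fun _ : α => c) μ := by
    convert hF'.sub hF using 2; simp
  rcases integrable_const_iff.1 hconst with h | h
  · exact hc h
  · exact measure_ne_top μ Set.univ hμ

lemma abs_integral_add_integral_sub_integral_le {F G H : α → ℝ} (hF : Integrable F μ)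
    (hG : Integrable G μ) (hH : Integrable H μ) :
    |∫ x, F x ∂μ + ∫ x, G x ∂μ - ∫ x, H x ∂μ| ≤ ∫ x, |H x - F x - G x| ∂μ := by
  rw [← integral_add hF hG, ← integral_sub (f := fun x => F x + G x) (hF.add hG) hH]
  refine abs_integral_le_integral_abs.trans_eq
    (integral_congr_ae (Eventually.of_forall fun x => ?_))
  dsimp only
  rw [abs_sub_comm, sub_sub]

variable {q₁ q₂ b₁ b₂ : ℝ} {R : ℝ → ℝ}

lemma integral_rpow_abs_add_rpow_abs_le (hq₁ : 0 < q₁) (hq₂ : 0 < q₂) {v : α → ℝ} {C : ℝ≥0∞}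
    (hC : C ≠ ⊤) (hv : AEStronglyMeasurable v μ) (hv₁ : eLpNorm v (ENNReal.ofReal q₁) μ ≤ C)
    (hv₂ : eLpNorm v (ENNReal.ofReal q₂) μ ≤ C) :
    ∫ x, (|v x| ^ q₁ + |v x| ^ q₂) ∂μ ≤ C.toReal ^ q₁ + C.toReal ^ q₂ := by
  rw [integral_add (integrable_rpow_abs_of_memLp hq₁ ⟨hv, hv₁.trans_lt hC.lt_top⟩)
    (integrable_rpow_abs_of_memLp hq₂ ⟨hv, hv₂.trans_lt hC.lt_top⟩)]
  exact add_le_add (integral_rpow_abs_le_of_eLpNorm_le hq₁ hC hv hv₁)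
    (integral_rpow_abs_le_of_eLpNorm_le hq₂ hC hv hv₂)

lemma integrable_map_sub_map_zero (hq₁ : 1 ≤ q₁) (hq₂ : 1 ≤ q₂) (hb₁ : 0 ≤ b₁) (hb₂ : 0 ≤ b₂)
    (hR : Differentiable ℝ R)
    (hR' : ∀ s : ℝ, |deriv R s| ≤ b₁ * |s| ^ (q₁ - 1) + b₂ * |s| ^ (q₂ - 1)) {v : α → ℝ}
    (hv₁ : MemLp v (ENNReal.ofReal q₁) μ) (hv₂ : MemLp v (ENNReal.ofReal q₂) μ) :
    Integrable (fun x => R (v x) - R 0) μ :=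
  (((integrable_rpow_abs_of_memLp (by linarith) hv₁).const_mul b₁).add
    ((integrable_rpow_abs_of_memLp (by linarith) hv₂).const_mul b₂)).mono'
    ((hR.continuous.comp_aestronglyMeasurable hv₁.1).sub aestronglyMeasurable_const)
    (Eventually.of_forall fun x => abs_sub_map_zero_le hq₁ hq₂ hb₁ hb₂ hR hR' (v x))

theorem tendsto_integral_abs_map_sub_map_sub_sub_map (hq₁ : 1 ≤ q₁) (hq₂ : 1 ≤ q₂)
    (hb₁ : 0 ≤ b₁) (hb₂ : 0 ≤ b₂) (hR : Differentiable ℝ R)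
    (hR' : ∀ s : ℝ, |deriv R s| ≤ b₁ * |s| ^ (q₁ - 1) + b₂ * |s| ^ (q₂ - 1)) (hR0 : R 0 = 0)
    {u : ℕ → α → ℝ} {g : α → ℝ} (hu : ∀ n, AEStronglyMeasurable (u n) μ) {C : ℝ≥0∞}
    (hC : C ≠ ⊤) (hu₁ : ∀ n, eLpNorm (u n) (ENNReal.ofReal q₁) μ ≤ C)
    (hu₂ : ∀ n, eLpNorm (u n) (ENNReal.ofReal q₂) μ ≤ C)
    (hae : ∀ᵐ x ∂μ, Tendsto (fun n => u n x) atTop (𝓝 (g x))) :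
    Tendsto (fun n => ∫ x, |R (u n x) - R (u n x - g x) - R (g x)| ∂μ) atTop (𝓝 0) := by
  have hg : AEStronglyMeasurable g μ := aestronglyMeasurable_of_tendsto_ae atTop hu hae
  have hg₁ := memLp_of_eLpNorm_le_of_tendsto_ae hC hu hu₁ hae
  have hg₂ := memLp_of_eLpNorm_le_of_tendsto_ae hC hu hu₂ hae
  have hφ {v : α → ℝ} (h₁ : MemLp v (ENNReal.ofReal q₁) μ) (h₂ : MemLp v (ENNReal.ofReal q₂) μ) :
      Integrable (fun x => |v x| ^ q₁ + |v x| ^ q₂) μ :=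
    (integrable_rpow_abs_of_memLp (by linarith) h₁).add
      (integrable_rpow_abs_of_memLp (by linarith) h₂)
  have hL1 := tendsto_integral_abs_map_add_sub_map_sub_map (φ := fun s => |s| ^ q₁ + |s| ^ q₂)
    hR.continuous hR0 (fun s => by positivity)
    (fun ε hε => exists_abs_map_add_sub_map_sub_map_le hq₁ hq₂ hb₁ hb₂ hR hR' hR0 hε)
    (f := fun n => u n - g) (fun n => (hu n).sub hg) hg
    (fun n => hφ (MemLp.sub ⟨hu n, (hu₁ n).trans_lt hC.lt_top⟩ hg₁)
      (MemLp.sub ⟨hu n, (hu₂ n).trans_lt hC.lt_top⟩ hg₂))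
    (fun n => integral_rpow_abs_add_rpow_abs_le (by linarith) (by linarith)
      (mul_ne_top ofNat_ne_top hC) ((hu n).sub hg)
      (eLpNorm_sub_lim_le_two_mul (ENNReal.one_le_ofReal.2 hq₁) hu hu₁ hae n)
      (eLpNorm_sub_lim_le_two_mul (ENNReal.one_le_ofReal.2 hq₂) hu hu₂ hae n))
    (hφ hg₁ hg₂) (by filter_upwards [hae] with x hx using by simpa using hx.sub_const (g x))
  simpa using hL1

theorem tendsto_integral_map_sub_add_integral_map_sub_integral_map (hq₁ : 1 ≤ q₁) (hq₂ : 1 ≤ q₂)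
    (hb₁ : 0 ≤ b₁) (hb₂ : 0 ≤ b₂) (hR : Differentiable ℝ R)
    (hR' : ∀ s : ℝ, |deriv R s| ≤ b₁ * |s| ^ (q₁ - 1) + b₂ * |s| ^ (q₂ - 1))
    (hRμ : R 0 = 0 ∨ μ Set.univ = ∞) {u : ℕ → α → ℝ} {g : α → ℝ}
    (hu : ∀ n, AEStronglyMeasurable (u n) μ) {C : ℝ≥0∞} (hC : C ≠ ⊤)
    (hu₁ : ∀ n, eLpNorm (u n) (ENNReal.ofReal q₁) μ ≤ C)
    (hu₂ : ∀ n, eLpNorm (u n) (ENNReal.ofReal q₂) μ ≤ C)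
    (hae : ∀ᵐ x ∂μ, Tendsto (fun n => u n x) atTop (𝓝 (g x))) :
    Tendsto (fun n => ∫ x, R (u n x - g x) ∂μ + ∫ x, R (g x) ∂μ - ∫ x, R (u n x) ∂μ)
      atTop (𝓝 0) := by
  have hg₁ := memLp_of_eLpNorm_le_of_tendsto_ae hC hu hu₁ hae
  have hg₂ := memLp_of_eLpNorm_le_of_tendsto_ae hC hu hu₂ hae
  have hu₁' : ∀ n, MemLp (u n) (ENNReal.ofReal q₁) μ := fun n => ⟨hu n, (hu₁ n).trans_lt hC.lt_top⟩
  have hu₂' : ∀ n, MemLp (u n) (ENNReal.ofReal q₂) μ := fun n => ⟨hu n, (hu₂ n).trans_lt hC.lt_top⟩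
  have hint {v : α → ℝ} (h₁ : MemLp v (ENNReal.ofReal q₁) μ) (h₂ : MemLp v (ENNReal.ofReal q₂) μ) :
      Integrable (fun x => R (v x) - R 0) μ :=
    integrable_map_sub_map_zero hq₁ hq₂ hb₁ hb₂ hR hR' h₁ h₂
  rcases eq_or_ne (R 0) 0 with hR0 | hR0
  · have hintR {v : α → ℝ} (h₁ : MemLp v (ENNReal.ofReal q₁) μ)
        (h₂ : MemLp v (ENNReal.ofReal q₂) μ) : Integrable (fun x => R (v x)) μ := by
      simpa [hR0] using hint h₁ h₂
    refine squeeze_zero_norm (fun n => ?_)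
      (tendsto_integral_abs_map_sub_map_sub_sub_map hq₁ hq₂ hb₁ hb₂ hR hR' hR0 hu hC hu₁ hu₂ hae)
    exact abs_integral_add_integral_sub_integral_le (hintR ((hu₁' n).sub hg₁) ((hu₂' n).sub hg₂))
      (hintR hg₁ hg₂) (hintR (hu₁' n) (hu₂' n))
  · have hμ := hRμ.resolve_left hR0
    have hf_zero : ∀ n, ∫ x, R (u n x - g x) ∂μ = 0 := fun n =>
      integral_eq_zero_of_integrable_sub_const hR0 hμ (hint ((hu₁' n).sub hg₁) ((hu₂' n).sub hg₂))
    have hu_zero : ∀ n, ∫ x, R (u n x) ∂μ = 0 := fun n =>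
      integral_eq_zero_of_integrable_sub_const hR0 hμ (hint (hu₁' n) (hu₂' n))
    simp only [hf_zero, hu_zero, integral_eq_zero_of_integrable_sub_const hR0 hμ (hint hg₁ hg₂),
      add_zero, sub_zero]
    exact tendsto_const_nhds

end Integrals

/-- Lemma 3.7 / `brezis-lieb`, Brezis–Lieb type splitting.
Let 1 < q₁ ≤ q₂ < ∞, R ∈ C¹(ℝ) with |R'(s)| ≤ b₁|s|^{q₁−1} + b₂|s|^{q₂−1}, and set
T̃(u) = ∫ R(u).  If {u_n} is bounded in L^{q₁}(ℝ^N) ∩ L^{q₂}(ℝ^N) and u_n → u a.e.,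
then T̃(u_n − u) + T̃(u) = T̃(u_n) + o(1). -/
theorem statement10
    (N : ℕ) (hN : 1 ≤ N)
    (q₁ q₂ : ℝ) (hq₁ : 1 < q₁) (hq₁₂ : q₁ ≤ q₂)
    (R : ℝ → ℝ) (hR : ContDiff ℝ 1 R)
    (b₁ b₂ : ℝ) (hb₁ : 0 < b₁) (hb₂ : 0 < b₂)
    (hR' : ∀ s : ℝ, |deriv R s| ≤ b₁ * |s| ^ (q₁ - 1) + b₂ * |s| ^ (q₂ - 1))
    (u : ℕ → EuclideanSpace ℝ (Fin N) → ℝ) (ulim : EuclideanSpace ℝ (Fin N) → ℝ)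
    (hmeas : ∀ n, AEStronglyMeasurable (u n)
      (volume : Measure (EuclideanSpace ℝ (Fin N))))
    -- boundedness in L^{q₁} ∩ L^{q₂}
    (hbdd : ∃ C : ℝ≥0∞, C ≠ ⊤ ∧ ∀ n,
      eLpNorm (u n) (ENNReal.ofReal q₁) volume ≤ C ∧
      eLpNorm (u n) (ENNReal.ofReal q₂) volume ≤ C)
    -- a.e. convergence
    (hae : ∀ᵐ x ∂(volume : Measure (EuclideanSpace ℝ (Fin N))),
      Tendsto (fun n => u n x) atTop (nhds (ulim x))) :
    Tendsto (fun n =>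
        (∫ x, R (u n x - ulim x)) + (∫ x, R (ulim x)) - ∫ x, R (u n x))
      atTop (nhds 0) := by
  obtain ⟨C, hC, hCu⟩ := hbdd
  have : Nonempty (Fin N) := ⟨⟨0, hN⟩⟩
  exact tendsto_integral_map_sub_add_integral_map_sub_integral_map hq₁.le (hq₁.trans_le hq₁₂).le
    hb₁.le hb₂.le (hR.differentiable one_ne_zero) hR'
    (Or.inr (measure_univ_of_isAddLeftInvariant volume)) hmeas hC (fun n => (hCu n).1)
    (fun n => (hCu n).2) hae
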